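/- Fix any integer N ≥ 2 and reals g_1, …, g_{N+1} ∈ (0,1). For each M ∈ {N, N+1}, let A_M = I_M + G_M, where G_M is the M×M matrix with zero diagonal and off-diagonal entries [G_M]_{i,j} = g_j for i ≠ j. Then det(A_{N+1}) = det(A_N) − g_{N+1} · Σ_{i=1}^{N} g_i · Π_{k ∈ {1,…,N}∖{i}} (1 − g_k). -/

import Mathlib

/-!
Write `A = diagonal (1 - g) + 𝟙 gᵀ`. When every `1 - g k` is a unit, the matrix determinant lemma in
its adjugate form gives `det A = ∏ₖ (1 - g k) + ∑ᵢ g i ∏_{k ≠ i} (1 - g k)`, and over `ℝ` this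
polynomial identity extends to all `g` by continuity, the set `{g | ∀ k, g k ≠ 1}` being dense.
The recursion is this closed form with the last index split off.
-/

open Matrix Finset

theorem Matrix.det_add_replicateCol_mul_replicateRow_eq_add_dotProduct_adjugate
    {m ι R : Type*} [Fintype m] [DecidableEq m] [Unique ι] [CommRing R]
    {A : Matrix m m R} (hA : IsUnit A.det) (u v : m → R) :
    (A + replicateCol ι u * replicateRow ι v).det = A.det + v ⬝ᵥ adjugate A *ᵥ u := by
  rw [det_add_replicateCol_mul_replicateRow hA, Matrix.mul_assoc, ← replicateCol_mulVec,
    det_unique (1 + replicateRow ι v * replicateCol ι (A⁻¹ *ᵥ u)), add_apply, one_apply_eq,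
    replicateRow_mul_replicateCol_apply, inv_def, smul_mulVec, dotProduct_smul, smul_eq_mul,
    mul_add, mul_one, Ring.mul_inverse_cancel_left _ _ hA]

/-- The matrix `G_M` of the paper, so that `A_M = 1 + offDiagCol g`. -/
def offDiagCol {ι R : Type*} [DecidableEq ι] [Zero R] (g : ι → R) : Matrix ι ι R :=
  of fun i j => if i = j then 0 else g j

section
variable {ι : Type*} [DecidableEq ι]

theorem one_add_offDiagCol_apply {R : Type*} [AddMonoidWithOne R] (g : ι → R) (i j : ι) :
    (1 + offDiagCol g) i j = if i = j then 1 else g j := by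
  by_cases h : i = j
  · simp [offDiagCol, h]
  · simp [offDiagCol, h, one_apply_ne h]

theorem one_add_offDiagCol {R : Type*} [CommRing R] (g : ι → R) :
    1 + offDiagCol g = diagonal (1 - g) + replicateCol Unit (1 : ι → R) * replicateRow Unit g := by
  ext i j
  rw [one_add_offDiagCol_apply]
  by_cases h : i = j <;> simp [h, mul_apply]

variable [Fintype ι]

theorem det_one_add_offDiagCol_of_isUnit {R : Type*} [CommRing R] {g : ι → R}
    (hg : ∀ i, IsUnit (1 - g i)) :
    (1 + offDiagCol g).det = ∏ i, (1 - g i) + ∑ i, g i * ∏ k ∈ univ.erase i, (1 - g k) := by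
  have hdet : IsUnit (diagonal (1 - g)).det := by
    rw [det_diagonal]
    exact IsUnit.prod_univ_iff.2 hg
  rw [one_add_offDiagCol, det_add_replicateCol_mul_replicateRow_eq_add_dotProduct_adjugate hdet,
    det_diagonal, adjugate_diagonal]
  simp [dotProduct, mulVec_diagonal]

theorem det_one_add_offDiagCol (g : ι → ℝ) :
    (1 + offDiagCol g).det = ∏ i, (1 - g i) + ∑ i, g i * ∏ k ∈ univ.erase i, (1 - g k) := by
  have hdense : Dense (Set.univ.pi fun _ : ι => ({1}ᶜ : Set ℝ)) :=
    dense_pi _ fun _ _ => dense_compl_singleton 1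
  have hcont : Continuous fun g : ι → ℝ => (1 + offDiagCol g).det := by
    refine (continuous_const.add (continuous_matrix fun i j => ?_)).matrix_det
    by_cases h : i = j <;> simp [offDiagCol, h, continuous_apply, continuous_const]
  have hcont' : Continuous fun g : ι → ℝ =>
      ∏ i, (1 - g i) + ∑ i, g i * ∏ k ∈ univ.erase i, (1 - g k) := by fun_prop
  refine congrFun (hcont.ext_on hdense hcont' fun g hg => ?_) g
  exact det_one_add_offDiagCol_of_isUnit fun i => (sub_ne_zero.2 (Ne.symm (hg i trivial))).isUnit
end

theorem Finset.prod_univ_erase_eq_prod_update {α M : Type*} [Fintype α] [DecidableEq α]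
    [CommMonoid M] (f : α → M) (a : α) :
    ∏ k ∈ univ.erase a, f k = ∏ k, Function.update f a 1 k := by
  rw [prod_update_of_mem (mem_univ a), one_mul, sdiff_singleton_eq_erase]

theorem Fin.prod_univ_erase_castSucc {M : Type*} [CommMonoid M] {n : ℕ} (f : Fin (n + 1) → M)
    (i : Fin n) :
    ∏ k ∈ univ.erase i.castSucc, f k = (∏ k ∈ univ.erase i, f k.castSucc) * f (Fin.last n) := by
  simp [prod_univ_erase_eq_prod_update, Fin.prod_univ_castSucc, Function.update_apply,
    (Fin.castSucc_lt_last i).ne']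

theorem Fin.prod_univ_erase_last {M : Type*} [CommMonoid M] {n : ℕ} (f : Fin (n + 1) → M) :
    ∏ k ∈ univ.erase (Fin.last n), f k = ∏ k : Fin n, f k.castSucc := by
  simp [prod_univ_erase_eq_prod_update, Fin.prod_univ_castSucc, Function.update_apply]

theorem det_A_recursion_general (N : ℕ) (g : Fin (N + 1) → ℝ)
    (A : Matrix (Fin (N + 1)) (Fin (N + 1)) ℝ)
    (hA : ∀ i j, A i j = if i = j then 1 else g j)
    (B : Matrix (Fin N) (Fin N) ℝ)
    (hB : ∀ i j, B i j = if i = j then 1 else g (Fin.castSucc j)) :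
    A.det = B.det - g (Fin.last N) *
      ∑ i : Fin N, g (Fin.castSucc i) *
        ∏ k ∈ Finset.univ.erase i, (1 - g (Fin.castSucc k)) := by
  have hA' : A = 1 + offDiagCol g := ext fun i j => by rw [hA, one_add_offDiagCol_apply]
  have hB' : B = 1 + offDiagCol (g ∘ Fin.castSucc) :=
    ext fun i j => by rw [hB, one_add_offDiagCol_apply, Function.comp_apply]
  rw [hA', hB', det_one_add_offDiagCol, det_one_add_offDiagCol, Fin.prod_univ_castSucc,
    Fin.sum_univ_castSucc, Fin.prod_univ_erase_last]
  simp only [Fin.prod_univ_erase_castSucc, Function.comp_apply, ← mul_assoc, ← Finset.sum_mul]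
  ring

/-- determinant recursion from size `N` to size `N+1`. -/
theorem det_A_recursion (N : ℕ) (hN : 2 ≤ N) (g : Fin (N + 1) → ℝ)
    (hg : ∀ i, g i ∈ Set.Ioo (0 : ℝ) 1)
    (A : Matrix (Fin (N + 1)) (Fin (N + 1)) ℝ)
    (hA : ∀ i j, A i j = if i = j then 1 else g j)
    (B : Matrix (Fin N) (Fin N) ℝ)
    (hB : ∀ i j, B i j = if i = j then 1 else g (Fin.castSucc j)) :
    A.det = B.det - g (Fin.last N) *
      ∑ i : Fin N, g (Fin.castSucc i) *
        ∏ k ∈ Finset.univ.erase i, (1 - g (Fin.castSucc k)) :=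
  det_A_recursion_general N g A hA B hB
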